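/- arXiv:2007.05554 — 5 statements merged into one kernel-verified Lean document; each statement's English description precedes it below -/
import Mathlib

section
/- Let X ⊆ ℝ^d be open, let a < b, let F : ℝ^d × ℝ → ℝ be continuously differentiable on a neighborhood of X × [a,b] with ∂F/∂w(x,w) > 0 for all x ∈ X and w ∈ [a,b], and let p : ℝ → ℝ be continuous with p(w) > 0 for all w ∈ [a,b]. Then the function G is continuously differentiable on the open set U, and the partial derivative ∂G/∂t(x,t) is strictly positive for every (x,t) ∈ U. -/
/-!
For fixed `x` the map `w ↦ F (x, w)` is strictly increasing on `[a, b]`, so for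
`F (x, a) < t < F (x, b)` the sublevel set `{w ∈ [a, b] | F (x, w) ≤ t}` is `[a, ψ (x, t)]`, where
`ψ (x, t) ∈ (a, b)` solves `F (x, ψ) = t`. By the implicit function theorem `ψ` is `C¹`, hence so is
`G = P ∘ ψ` with `P c = ∫ a..c, p`, and `∂G/∂t = p ψ / ∂_w F (x, ψ) > 0`.
-/

open MeasureTheory Set Filter Topology

variable {E : Type*} [NormedAddCommGroup E] [NormedSpace ℝ E] [CompleteSpace E]

theorem ContDiffAt.exists_contDiffAt_solution_snd {F : E × ℝ → ℝ} {x₀ : E} {w₀ c : ℝ}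
    (hF : ContDiffAt ℝ 1 F (x₀, w₀)) (hc : HasDerivAt (fun w => F (x₀, w)) c w₀) (hc0 : c ≠ 0) :
    ∃ ψ : E × ℝ → ℝ, ContDiffAt ℝ 1 ψ (x₀, F (x₀, w₀)) ∧ ψ (x₀, F (x₀, w₀)) = w₀ ∧
      ∀ᶠ q in 𝓝 (x₀, F (x₀, w₀)), F (q.1, ψ q) = q.2 := by
  set f : (E × ℝ) × ℝ → ℝ := fun v => F (v.1.1, v.2) - v.1.2
  set u : (E × ℝ) × ℝ := ((x₀, F (x₀, w₀)), w₀)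
  have hf : ContDiffAt ℝ 1 f u := by
    have : ContDiffAt ℝ 1 (fun v : (E × ℝ) × ℝ => (v.1.1, v.2)) u := by fun_prop
    exact (hF.comp u this).sub (by fun_prop)
  have hslice : HasDerivAt (fun w => f (u.1, w)) ((fderiv ℝ f u ∘L .inr ℝ (E × ℝ) ℝ) 1) w₀ :=
    (hf.differentiableAt one_ne_zero).hasFDerivAt.comp_hasDerivAt w₀
      ((hasDerivAt_const w₀ u.1).prodMk (hasDerivAt_id w₀))
  have hinv : (fderiv ℝ f u ∘L .inr ℝ (E × ℝ) ℝ).IsInvertible := by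
    refine ⟨.unitsEquivAut ℝ (.mk0 c hc0), ContinuousLinearMap.ext_ring ?_⟩
    simpa using (hc.sub_const _).unique hslice
  refine ⟨hf.implicitFunction one_ne_zero hinv, hf.contDiffAt_implicitFunction one_ne_zero hinv,
    hf.implicitFunction_apply_self one_ne_zero hinv, ?_⟩
  filter_upwards [hf.eventually_apply_implicitFunction one_ne_zero hinv] with q hq
  simpa [f, u, sub_eq_zero] using hq

theorem StrictMonoOn.setIntegral_sublevel_eq_intervalIntegral {f p : ℝ → ℝ} {a b w : ℝ}
    (hf : StrictMonoOn f (Icc a b)) (hw : w ∈ Icc a b) :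
    ∫ v in {v | v ∈ Icc a b ∧ f v ≤ f w}, p v = ∫ v in a..w, p v := by
  have hset : {v | v ∈ Icc a b ∧ f v ≤ f w} = Icc a w := by
    ext v
    simp only [mem_ofPred_eq, mem_Icc]
    constructor
    · rintro ⟨hv, hle⟩
      exact ⟨hv.1, (hf.le_iff_le hv hw).1 hle⟩
    · rintro ⟨hav, hvw⟩
      have hv : v ∈ Icc a b := ⟨hav, hvw.trans hw.2⟩
      exact ⟨hv, (hf.le_iff_le hv hw).2 hvw⟩
  rw [hset, intervalIntegral.integral_of_le hw.1, integral_Icc_eq_integral_Ioc]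

theorem Continuous.contDiff_one_intervalIntegral {f : ℝ → E} (hf : Continuous f) (a : ℝ) :
    ContDiff ℝ 1 fun w => ∫ v in a..w, f v := by
  refine contDiff_one_iff_deriv.2
    ⟨fun w => (hf.integral_hasStrictDerivAt a w).hasDerivAt.differentiableAt, ?_⟩
  rwa [funext (hf.deriv_integral f a)]

/-- The paper's `G`. -/
noncomputable def sublevelIntegral (F : E × ℝ → ℝ) (p : ℝ → ℝ) (a b : ℝ) (q : E × ℝ) : ℝ :=
  ∫ w in {w | w ∈ Icc a b ∧ F (q.1, w) ≤ q.2}, p w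

theorem contDiffAt_sublevelIntegral_and_hasDerivAt {F : E × ℝ → ℝ} {p : ℝ → ℝ} {a b w₀ c : ℝ}
    {x₀ : E} (hmono : ∀ᶠ x in 𝓝 x₀, StrictMonoOn (fun w => F (x, w)) (Icc a b))
    (hF : ContDiffAt ℝ 1 F (x₀, w₀)) (hc : HasDerivAt (fun w => F (x₀, w)) c w₀) (hc0 : c ≠ 0)
    (hw₀ : w₀ ∈ Ioo a b) (hp : Continuous p) :
    ContDiffAt ℝ 1 (sublevelIntegral F p a b) (x₀, F (x₀, w₀)) ∧
      HasDerivAt (fun t => sublevelIntegral F p a b (x₀, t)) (p w₀ / c) (F (x₀, w₀)) := by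
  obtain ⟨ψ, hψ, hψ₀, hFψ⟩ := hF.exists_contDiffAt_solution_snd hc hc0
  set q₀ := (x₀, F (x₀, w₀))
  have hψIoo : ∀ᶠ q in 𝓝 q₀, ψ q ∈ Ioo a b :=
    hψ.continuousAt.preimage_mem_nhds (hψ₀ ▸ isOpen_Ioo.mem_nhds hw₀)
  have hG : sublevelIntegral F p a b =ᶠ[𝓝 q₀] fun q => ∫ v in a..ψ q, p v := by
    filter_upwards [continuousAt_fst.eventually hmono, hψIoo, hFψ] with q hmono_q hq hFq
    rw [sublevelIntegral, ← hFq]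
    exact hmono_q.setIntegral_sublevel_eq_intervalIntegral (Ioo_subset_Icc_self hq)
  refine ⟨((hp.contDiff_one_intervalIntegral a).contDiffAt.comp q₀ hψ).congr_of_eventuallyEq hG, ?_⟩
  have hline : Tendsto (fun t => (x₀, t)) (𝓝 (F (x₀, w₀))) (𝓝 q₀) :=
    (Continuous.prodMk_right x₀).tendsto _
  have hψt : HasDerivAt (fun t => ψ (x₀, t)) c⁻¹ (F (x₀, w₀)) :=
    HasDerivAt.of_local_left_inverse (hψ.continuousAt.comp hline) (hψ₀ ▸ hc) hc0
      (hline.eventually hFψ)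
  have := ((hp.integral_hasStrictDerivAt a _).hasDerivAt.comp _ hψt).congr_of_eventuallyEq
    (hline.eventually hG)
  rwa [hψ₀, ← div_eq_mul_inv] at this

theorem IsOpen.setOf_mem_and_lt_and_lt {α : Type*} [TopologicalSpace α] {X : Set α}
    (hX : IsOpen X) {g h : α → ℝ} (hg : ContinuousOn g X) (hh : ContinuousOn h X) :
    IsOpen {q : α × ℝ | q.1 ∈ X ∧ g q.1 < q.2 ∧ q.2 < h q.1} := by
  rw [isOpen_iff_mem_nhds]
  rintro ⟨x, t⟩ ⟨hx, hgt, hth⟩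
  have hgx := (hg.continuousAt (hX.mem_nhds hx)).comp (continuousAt_fst (p := (x, t)))
  have hhx := (hh.continuousAt (hX.mem_nhds hx)).comp (continuousAt_fst (p := (x, t)))
  filter_upwards [continuousAt_fst.preimage_mem_nhds (hX.mem_nhds hx),
    hgx.eventually_lt continuousAt_snd hgt, continuousAt_snd.eventually_lt hhx hth]
    with q hqX hgq hqh using ⟨hqX, hgq, hqh⟩

/-- The single-monotone-interval case of the paper's Lemma 1: the CDF
`G(x,t) = ∫_{ {w ∈ [a,b] : F(x,w) ≤ t} } p(w) dw` is continuously differentiable on the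
open set `U = {(x,t) : x ∈ X, F(x,a) < t < F(x,b)}`, with strictly positive density
`∂G/∂t(x,t)` on `U`. -/
theorem cdf_contDiff_and_density_pos
    {d : ℕ} (X : Set (EuclideanSpace ℝ (Fin d))) (hX : IsOpen X)
    (a b : ℝ) (hab : a < b)
    (F : EuclideanSpace ℝ (Fin d) × ℝ → ℝ)
    (V : Set (EuclideanSpace ℝ (Fin d) × ℝ)) (hV : IsOpen V)
    (hXV : X ×ˢ Icc a b ⊆ V) (hF : ContDiffOn ℝ 1 F V)
    (hFw : ∀ x ∈ X, ∀ w ∈ Icc a b, 0 < deriv (fun w' => F (x, w')) w)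
    (p : ℝ → ℝ) (hp : Continuous p) (hppos : ∀ w ∈ Icc a b, 0 < p w) :
    IsOpen {q : EuclideanSpace ℝ (Fin d) × ℝ | q.1 ∈ X ∧ F (q.1, a) < q.2 ∧ q.2 < F (q.1, b)} ∧
    ContDiffOn ℝ 1
      (fun q : EuclideanSpace ℝ (Fin d) × ℝ =>
        ∫ w in {w | w ∈ Icc a b ∧ F (q.1, w) ≤ q.2}, p w)
      {q : EuclideanSpace ℝ (Fin d) × ℝ | q.1 ∈ X ∧ F (q.1, a) < q.2 ∧ q.2 < F (q.1, b)} ∧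
    ∀ q ∈ {q : EuclideanSpace ℝ (Fin d) × ℝ | q.1 ∈ X ∧ F (q.1, a) < q.2 ∧ q.2 < F (q.1, b)},
      0 < deriv (fun t : ℝ => ∫ w in {w | w ∈ Icc a b ∧ F (q.1, w) ≤ t}, p w) q.2 := by
  have hFat : ∀ x ∈ X, ∀ w ∈ Icc a b, ContDiffAt ℝ 1 F (x, w) := fun x hx w hw =>
    hF.contDiffAt (hV.mem_nhds (hXV ⟨hx, hw⟩))
  have hslice : ∀ x ∈ X, ∀ w ∈ Icc a b,
      HasDerivAt (fun w' => F (x, w')) (deriv (fun w' => F (x, w')) w) w := fun x hx w hw =>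
    (((hFat x hx w hw).differentiableAt one_ne_zero).comp w (by fun_prop)).hasDerivAt
  have hcont : ∀ x ∈ X, ContinuousOn (fun w => F (x, w)) (Icc a b) := fun x hx =>
    continuousOn_of_forall_continuousAt fun w hw => (hslice x hx w hw).continuousAt
  have hmono : ∀ x ∈ X, StrictMonoOn (fun w => F (x, w)) (Icc a b) := fun x hx =>
    strictMonoOn_of_deriv_pos (convex_Icc a b) (hcont x hx)
      fun w hw => hFw x hx w (interior_subset hw)
  have hend : ∀ w ∈ Icc a b, ContinuousOn (fun x => F (x, w)) X := fun w hw =>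
    continuousOn_of_forall_continuousAt fun x hx =>
      (hFat x hx w hw).continuousAt.comp (f := fun x' => (x', w)) (by fun_prop)
  have hlocal : ∀ x ∈ X, ∀ t, F (x, a) < t → t < F (x, b) →
      ContDiffAt ℝ 1 (sublevelIntegral F p a b) (x, t) ∧
        0 < deriv (fun t => sublevelIntegral F p a b (x, t)) t := by
    intro x hx t hat htb
    obtain ⟨w, hw, rfl⟩ := intermediate_value_Ioo hab.le (hcont x hx) ⟨hat, htb⟩
    have hwI := Ioo_subset_Icc_self hw
    obtain ⟨hG, hGt⟩ := contDiffAt_sublevelIntegral_and_hasDerivAt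
      (eventually_of_mem (hX.mem_nhds hx) hmono) (hFat x hx w hwI) (hslice x hx w hwI)
      (hFw x hx w hwI).ne' hw hp
    exact ⟨hG, hGt.deriv ▸ div_pos (hppos w hwI) (hFw x hx w hwI)⟩
  exact ⟨hX.setOf_mem_and_lt_and_lt (hend a ⟨le_rfl, hab.le⟩) (hend b ⟨hab.le, le_rfl⟩),
    fun q ⟨hx, hat, htb⟩ => (hlocal q.1 hx q.2 hat htb).1.contDiffWithinAt,
    fun q ⟨hx, hat, htb⟩ => (hlocal q.1 hx q.2 hat htb).2⟩
end

section
/- Let a < b, let f : ℝ → ℝ be continuously differentiable on a neighborhood of [a,b], and let p : ℝ → ℝ be continuous. Let t ∈ ℝ be such that f(a) ≠ t, f(b) ≠ t, the level set R = {w ∈ [a,b] : f(w) = t} is finite, and f'(w) ≠ 0 for every w ∈ R. Then the function H(t') := ∫_{{w ∈ [a,b] : f(w) ≤ t'}} p(w) dw is differentiable at t with H'(t) = Σ_{w ∈ R} p(w) / |f'(w)|. -/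
/-!
Near a root `w`, `f` is strictly monotone on a small interval `(c, d)`, on which the sublevel set
`{f ≤ t'}` is `(c, g t']` or `[g t', d)` with `g` the local inverse of `f`; the fundamental
theorem of calculus and the inverse function theorem then give the contribution `p w / |f' w|`.
These intervals are taken pairwise disjoint, and on the compact remainder of `[a, b]` the
function `f` stays away from `t`, so there the sublevel set does not move for `t'` near `t`.
-/

open MeasureTheory Set Filter Topology

theorem HasStrictDerivAt.exists_Ioo_strictMonoOn {f : ℝ → ℝ} {f' w : ℝ}
    (hf : HasStrictDerivAt f f' w) (hf' : 0 < f') {N : Set ℝ} (hN : N ∈ 𝓝 w) :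
    ∃ c d, w ∈ Ioo c d ∧ Ioo c d ⊆ N ∧ StrictMonoOn f (Ioo c d) := by
  obtain ⟨s, hs, hbound⟩ := eventually_prod_self_iff'.1 <|
    nhds_prod_eq (x := w) (y := w) ▸ hf.hasStrictFDerivAt.isLittleO.def (half_pos hf')
  obtain ⟨c, d, hw, hcd⟩ := mem_nhds_iff_exists_Ioo_subset.1 (inter_mem hs hN)
  refine ⟨c, d, hw, fun x hx => (hcd hx).2, fun x hx y hy hxy => ?_⟩
  have h := (abs_le.1 (hbound y (hcd hy).1 x (hcd hx).1)).1
  simp only [ContinuousLinearMap.toSpanSingleton_apply, smul_eq_mul,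
    Real.norm_eq_abs, abs_of_pos (sub_pos.2 hxy)] at h
  nlinarith

theorem HasStrictDerivAt.exists_Ioo_strictAntiOn {f : ℝ → ℝ} {f' w : ℝ}
    (hf : HasStrictDerivAt f f' w) (hf' : f' < 0) {N : Set ℝ} (hN : N ∈ 𝓝 w) :
    ∃ c d, w ∈ Ioo c d ∧ Ioo c d ⊆ N ∧ StrictAntiOn f (Ioo c d) := by
  obtain ⟨c, d, hw, hN, hmono⟩ := hf.neg.exists_Ioo_strictMonoOn (neg_pos.2 hf') hN
  exact ⟨c, d, hw, hN, fun x hx y hy hxy => neg_lt_neg_iff.1 (hmono hx hy hxy)⟩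

theorem StrictMonoOn.sublevel_Ioo_eq_Ioc {f : ℝ → ℝ} {c d y : ℝ}
    (hf : StrictMonoOn f (Ioo c d)) (hy : y ∈ Ioo c d) :
    {x | x ∈ Ioo c d ∧ f x ≤ f y} = Ioc c y := by
  ext x
  constructor
  · rintro ⟨hx, hxy⟩
    exact ⟨hx.1, (hf.le_iff_le hx hy).1 hxy⟩
  · rintro ⟨hcx, hxy⟩
    have hx : x ∈ Ioo c d := ⟨hcx, hxy.trans_lt hy.2⟩
    exact ⟨hx, (hf.le_iff_le hx hy).2 hxy⟩

theorem StrictAntiOn.sublevel_Ioo_eq_Ico {f : ℝ → ℝ} {c d y : ℝ}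
    (hf : StrictAntiOn f (Ioo c d)) (hy : y ∈ Ioo c d) :
    {x | x ∈ Ioo c d ∧ f x ≤ f y} = Ico y d := by
  ext x
  constructor
  · rintro ⟨hx, hxy⟩
    exact ⟨(hf.le_iff_ge hx hy).1 hxy, hx.2⟩
  · rintro ⟨hyx, hxd⟩
    have hx : x ∈ Ioo c d := ⟨hy.1.trans_le hyx, hxd⟩
    exact ⟨hx, (hf.le_iff_ge hx hy).2 hyx⟩

theorem IsCompact.eventually_sublevel_eq {α β : Type*} [TopologicalSpace α] [LinearOrder β]
    [TopologicalSpace β] [OrderTopology β] [NoMaxOrder β] [NoMinOrder β] {K : Set α}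
    (hK : IsCompact K) {f : α → β} (hf : ContinuousOn f K) {t : β} (ht : ∀ x ∈ K, f x ≠ t) :
    ∀ᶠ t' in 𝓝 t, {x | x ∈ K ∧ f x ≤ t'} = {x | x ∈ K ∧ f x ≤ t} := by
  have hnhds : (f '' K)ᶜ ∈ 𝓝 t :=
    (hK.image_of_continuousOn hf).isClosed.isOpen_compl.mem_nhds
      (by rintro ⟨x, hx, hxt⟩; exact ht x hx hxt)
  obtain ⟨l, u, ⟨hlt, htu⟩, hgap⟩ := mem_nhds_iff_exists_Ioo_subset.1 hnhds
  filter_upwards [Ioo_mem_nhds hlt htu] with t' ⟨hlt', htu'⟩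
  ext x
  refine and_congr_right fun hx => ?_
  have hfx : ¬(l < f x ∧ f x < u) := fun h => hgap h ⟨x, hx, rfl⟩
  rw [not_and_or, not_lt, not_lt] at hfx
  rcases hfx with h | h <;> constructor <;> intro <;> order

theorem HasStrictDerivAt.exists_hasDerivAt_rightInverse {f : ℝ → ℝ} {f' w : ℝ}
    (hf : HasStrictDerivAt f f' w) (hf' : f' ≠ 0) :
    ∃ g : ℝ → ℝ, HasDerivAt g f'⁻¹ (f w) ∧ g (f w) = w ∧ ∀ᶠ t' in 𝓝 (f w), f (g t') = t' :=
  ⟨_, (hf.to_localInverse hf').hasDerivAt,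
    (hf.hasStrictFDerivAt_equiv hf').localInverse_apply_image, hf.eventually_right_inverse hf'⟩

theorem HasStrictDerivAt.exists_Ioo_hasDerivAt_integral_sublevel {f p : ℝ → ℝ} {f' w : ℝ}
    (hf : HasStrictDerivAt f f' w) (hf' : f' ≠ 0) (hp : Continuous p) {N : Set ℝ}
    (hN : N ∈ 𝓝 w) :
    ∃ c d, w ∈ Ioo c d ∧ Ioo c d ⊆ N ∧
      HasDerivAt (fun t' => ∫ x in {x | x ∈ Ioo c d ∧ f x ≤ t'}, p x) (p w / |f'|) (f w) := by
  obtain ⟨g, hgd, hgw, hfg⟩ := hf.exists_hasDerivAt_rightInverse hf'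
  have hg : Tendsto g (𝓝 (f w)) (𝓝 w) := by simpa only [hgw] using hgd.continuousAt.tendsto
  have hFTC (e : ℝ) : HasDerivAt (fun t' => ∫ x in e..g t', p x) (p w * f'⁻¹) (f w) :=
    (hp.integral_hasStrictDerivAt e w).hasDerivAt.comp_of_eq (f w) hgd hgw.symm
  rcases hf'.lt_or_gt with hneg | hpos
  · obtain ⟨c, d, hw, hcd, hanti⟩ := hf.exists_Ioo_strictAntiOn hneg hN
    refine ⟨c, d, hw, hcd, ?_⟩
    rw [abs_of_neg hneg, div_neg, div_eq_mul_inv]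
    refine (hFTC d).fun_neg.congr_of_eventuallyEq ?_
    filter_upwards [hfg, hg (Ioo_mem_nhds hw.1 hw.2)] with t' hfgt hgt
    conv_lhs => rw [← hfgt]
    rw [hanti.sublevel_Ioo_eq_Ico hgt, integral_Ico_eq_integral_Ioc,
      ← intervalIntegral.integral_of_le hgt.2.le, intervalIntegral.integral_symm]
  · obtain ⟨c, d, hw, hcd, hmono⟩ := hf.exists_Ioo_strictMonoOn hpos hN
    refine ⟨c, d, hw, hcd, ?_⟩
    rw [abs_of_pos hpos, div_eq_mul_inv]
    refine (hFTC c).congr_of_eventuallyEq ?_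
    filter_upwards [hfg, hg (Ioo_mem_nhds hw.1 hw.2)] with t' hfgt hgt
    conv_lhs => rw [← hfgt]
    rw [hmono.sublevel_Ioo_eq_Ioc hgt, intervalIntegral.integral_of_le hgt.1.le]

theorem setIntegral_sublevel_eq_add_sum {α β E ι : Type*} [MeasurableSpace α] [LE β]
    [NormedAddCommGroup E] [NormedSpace ℝ E] {μ : Measure α} {A : Set α} {f : α → β}
    {p : α → E} {t' : β} (s : Finset ι) {I : ι → Set α} (hIA : ∀ i ∈ s, I i ⊆ A)
    (hI : ∀ i ∈ s, MeasurableSet (I i)) (hdisj : (s : Set ι).PairwiseDisjoint I)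
    (hS : MeasurableSet {x | x ∈ A ∧ f x ≤ t'}) (hp : IntegrableOn p A μ) :
    ∫ x in {x | x ∈ A ∧ f x ≤ t'}, p x ∂μ =
      ∫ x in {x | x ∈ A \ ⋃ i ∈ s, I i ∧ f x ≤ t'}, p x ∂μ +
        ∑ i ∈ s, ∫ x in {x | x ∈ I i ∧ f x ≤ t'}, p x ∂μ := by
  set S := {x | x ∈ A ∧ f x ≤ t'}
  have hSI : ∀ i ∈ s, {x | x ∈ I i ∧ f x ≤ t'} = S ∩ I i := fun i hi => by
    ext x
    exact ⟨fun hx => ⟨⟨hIA i hi hx.1, hx.2⟩, hx.1⟩, fun hx => ⟨hx.2, hx.1.2⟩⟩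
  have hSU : {x | x ∈ A \ ⋃ i ∈ s, I i ∧ f x ≤ t'} = S \ ⋃ i ∈ s, I i := by
    ext x
    exact ⟨fun hx => ⟨⟨hx.1.1, hx.2⟩, hx.1.2⟩, fun hx => ⟨⟨hx.1.1, hx.2⟩, hx.1.2⟩⟩
  have hpS : IntegrableOn p S μ := hp.mono_set fun x hx => hx.1
  rw [hSU, Finset.sum_congr rfl fun i hi => by rw [hSI i hi],
    ← integral_biUnion_finset s (fun i hi => hS.inter (hI i hi))
      (hdisj.mono fun _ => inter_subset_right) (fun _ _ => hpS.mono_set inter_subset_left),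
    ← inter_iUnion₂, add_comm, integral_inter_add_sdiff (Finset.measurableSet_biUnion s hI) hpS]

theorem IsCompact.hasDerivAt_setIntegral_sublevel {α E ι : Type*} [TopologicalSpace α]
    [T2Space α] [MeasurableSpace α] [OpensMeasurableSpace α] [NormedAddCommGroup E]
    [NormedSpace ℝ E] {μ : Measure α} {A : Set α} (hA : IsCompact A) {f : α → ℝ}
    (hf : ContinuousOn f A) {p : α → E} (hp : IntegrableOn p A μ) {t : ℝ} (s : Finset ι)
    {I : ι → Set α} (hI : ∀ i ∈ s, IsOpen (I i)) (hIA : ∀ i ∈ s, I i ⊆ A)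
    (hdisj : (s : Set ι).PairwiseDisjoint I) (ht : ∀ x ∈ A \ ⋃ i ∈ s, I i, f x ≠ t) {D : ι → E}
    (hD : ∀ i ∈ s, HasDerivAt (fun t' => ∫ x in {x | x ∈ I i ∧ f x ≤ t'}, p x ∂μ) (D i) t) :
    HasDerivAt (fun t' => ∫ x in {x | x ∈ A ∧ f x ≤ t'}, p x ∂μ) (∑ i ∈ s, D i) t := by
  have hK : IsCompact (A \ ⋃ i ∈ s, I i) := hA.diff (isOpen_biUnion hI)
  have hKconst := hK.eventually_sublevel_eq (hf.mono sdiff_subset) ht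
  have hderivK : HasDerivAt (fun t' => ∫ x in {x | x ∈ A \ ⋃ i ∈ s, I i ∧ f x ≤ t'}, p x ∂μ) 0 t :=
    (hasDerivAt_const t _).congr_of_eventuallyEq
      (hKconst.mono fun _ ht' => congrArg (fun S => ∫ x in S, p x ∂μ) ht')
  have hsum := hderivK.fun_add (HasDerivAt.fun_sum hD)
  rw [zero_add] at hsum
  refine hsum.congr_of_eventuallyEq (.of_forall fun t' => ?_)
  exact setIntegral_sublevel_eq_add_sum s hIA (fun i hi => (hI i hi).measurableSet) hdisj
    (hf.preimage_isClosed_of_isClosed hA.isClosed isClosed_Iic).measurableSet hp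

theorem sublevel_integral_hasDerivAt_general
    (a b : ℝ) (f : ℝ → ℝ)
    (V : Set ℝ) (hV : IsOpen V) (hsub : Icc a b ⊆ V) (hf : ContDiffOn ℝ 1 f V)
    (p : ℝ → ℝ) (hp : Continuous p) (t : ℝ)
    (hfa : f a ≠ t) (hfb : f b ≠ t)
    (hRfin : {w ∈ Icc a b | f w = t}.Finite)
    (hreg : ∀ w ∈ {w ∈ Icc a b | f w = t}, deriv f w ≠ 0) :
    HasDerivAt (fun t' : ℝ => ∫ w in {w | w ∈ Icc a b ∧ f w ≤ t'}, p w)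
      (∑ w ∈ hRfin.toFinset, p w / |deriv f w|) t := by
  obtain ⟨U, hU, hUdisj⟩ := hRfin.t2_separation
  have hpiece : ∀ w ∈ hRfin.toFinset, ∃ c d, w ∈ Ioo c d ∧ Ioo c d ⊆ U w ∩ Ioo a b ∧
      HasDerivAt (fun t' => ∫ x in {x | x ∈ Ioo c d ∧ f x ≤ t'}, p x) (p w / |deriv f w|) t := by
    intro w hw
    obtain ⟨⟨haw, hwb⟩, hwt⟩ := hRfin.mem_toFinset.1 hw
    have hwab : w ∈ Ioo a b :=
      ⟨haw.lt_of_ne (by rintro rfl; exact hfa hwt), hwb.lt_of_ne (by rintro rfl; exact hfb hwt)⟩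
    have hstrict : HasStrictDerivAt f (deriv f w) w :=
      (hf.contDiffAt (hV.mem_nhds (hsub ⟨haw, hwb⟩))).hasStrictDerivAt one_ne_zero
    simpa only [hwt] using hstrict.exists_Ioo_hasDerivAt_integral_sublevel
      (hreg w (hRfin.mem_toFinset.1 hw)) hp
      (inter_mem ((hU w).2.mem_nhds (hU w).1) (Ioo_mem_nhds hwab.1 hwab.2))
  choose! c d hwcd hcdU hderiv using hpiece
  refine isCompact_Icc.hasDerivAt_setIntegral_sublevel (hf.continuousOn.mono hsub)
    hp.integrableOn_Icc _ (fun _ _ => isOpen_Ioo)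
    (fun w hw => (hcdU w hw).trans (inter_subset_right.trans Ioo_subset_Icc_self))
    ((hUdisj.subset hRfin.coe_toFinset.subset).mono_on fun w hw =>
      (hcdU w hw).trans inter_subset_left)
    (fun x hx hxt => ?_) hderiv
  have hxR : x ∈ hRfin.toFinset := hRfin.mem_toFinset.2 ⟨hx.1, hxt⟩
  exact hx.2 (mem_iUnion₂.2 ⟨x, hxR, hwcd x hxR⟩)

/-- The density formula from the proof of the paper's Lemma 1 specialized to a finite
regular level set: `H(t') = ∫_{ {w ∈ [a,b] : f(w) ≤ t'} } p(w) dw` is differentiable at `t`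
with `H'(t) = Σ_{w ∈ R} p(w)/|f'(w)|`, where `R = {w ∈ [a,b] : f(w) = t}`. -/
theorem sublevel_integral_hasDerivAt
    (a b : ℝ) (hab : a < b) (f : ℝ → ℝ)
    (V : Set ℝ) (hV : IsOpen V) (hsub : Icc a b ⊆ V) (hf : ContDiffOn ℝ 1 f V)
    (p : ℝ → ℝ) (hp : Continuous p) (t : ℝ)
    (hfa : f a ≠ t) (hfb : f b ≠ t)
    (hRfin : {w ∈ Icc a b | f w = t}.Finite)
    (hreg : ∀ w ∈ {w ∈ Icc a b | f w = t}, deriv f w ≠ 0) :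
    HasDerivAt (fun t' : ℝ => ∫ w in {w | w ∈ Icc a b ∧ f w ≤ t'}, p w)
      (∑ w ∈ hRfin.toFinset, p w / |deriv f w|) t :=
  sublevel_integral_hasDerivAt_general a b f V hV hsub hf p hp t hfa hfb hRfin hreg
end

section
/- Let a < b, let F : ℝ^d × ℝ → ℝ be continuously differentiable on a neighborhood of {x0} × [a,b] for some x0 ∈ ℝ^d, and let p : ℝ → ℝ be continuous. Let t ∈ ℝ be such that F(x0,a) ≠ t, F(x0,b) ≠ t, the level set R = {w ∈ [a,b] : F(x0,w) = t} is finite, and ∂F/∂w(x0,w) ≠ 0 for every w ∈ R. Then the function x ↦ ∫_{{w ∈ [a,b] : F(x,w) ≤ t}} p(w) dw is differentiable at x0, with differential equal to −Σ_{w ∈ R} (p(w) / |∂F/∂w(x0,w)|) · D_x F(x0,w), where D_x F(x0,w) is the differential of F(·,w) at x0. -/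
/-!
Near a regular root `r` of `F (x₀, ·) = t` the implicit function theorem gives a
differentiable root `ψ x` of `F (x, ·) = t` with `ψ x₀ = r`, and the strict derivative of `F`
makes `F (x, ·)` strictly monotone on a fixed ball around `r` for all `x` near `x₀`. On that ball
the sublevel set is therefore an interval with `ψ x` as one end point, and its integral is
differentiated by the fundamental theorem of calculus. Away from the finitely many roots,
`F (x₀, ·) - t` has no zero on a compact set, so its sign, and hence this part of the sublevel
set, does not change for `x` near `x₀`.
-/

open Set Filter Topology MeasureTheory Metric Function

theorem StrictMonoOn.setOf_le_inter_Ioo {α β : Type*} [LinearOrder α] [Preorder β]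
    {f : α → β} {a b y : α} (hf : StrictMonoOn f (Ioo a b)) (hy : y ∈ Ioo a b) :
    {w | f w ≤ f y} ∩ Ioo a b = Ioc a y := by
  ext w
  constructor
  · rintro ⟨hw, hwab⟩
    exact ⟨hwab.1, (hf.le_iff_le hwab hy).1 hw⟩
  · rintro ⟨haw, hwy⟩
    have hwab : w ∈ Ioo a b := ⟨haw, hwy.trans_lt hy.2⟩
    exact ⟨(hf.le_iff_le hwab hy).2 hwy, hwab⟩

theorem StrictAntiOn.setOf_le_inter_Ioo {α β : Type*} [LinearOrder α] [Preorder β]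
    {f : α → β} {a b y : α} (hf : StrictAntiOn f (Ioo a b)) (hy : y ∈ Ioo a b) :
    {w | f w ≤ f y} ∩ Ioo a b = Ico y b := by
  ext w
  constructor
  · rintro ⟨hw, hwab⟩
    exact ⟨(hf.le_iff_ge hwab hy).1 hw, hwab.2⟩
  · rintro ⟨hyw, hwb⟩
    have hwab : w ∈ Ioo a b := ⟨hy.1.trans_le hyw, hwb⟩
    exact ⟨(hf.le_iff_ge hwab hy).2 hyw, hwab⟩

theorem IsCompact.eventually_forall_le_iff {X Y β : Type*} [TopologicalSpace X]
    [TopologicalSpace Y] [LinearOrder β] [TopologicalSpace β] [OrderTopology β]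
    {F : X × Y → β} {x₀ : X} {K : Set Y} {t : β} (hK : IsCompact K)
    (hF : ∀ y ∈ K, ContinuousAt F (x₀, y)) (hne : ∀ y ∈ K, F (x₀, y) ≠ t) :
    ∀ᶠ x in 𝓝 x₀, ∀ y ∈ K, (F (x, y) ≤ t ↔ F (x₀, y) ≤ t) := by
  refine hK.eventually_forall_of_forall_eventually fun y hy => ?_
  have hF₀ : ContinuousAt (fun z : X × Y => F (x₀, z.2)) (x₀, y) :=
    (hF y hy).comp (f := fun z : X × Y => (x₀, z.2))
      (continuous_const.prodMk continuous_snd).continuousAt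
  rcases (hne y hy).lt_or_gt with hlt | hgt
  · filter_upwards [(hF y hy).eventually (gt_mem_nhds hlt), hF₀.eventually (gt_mem_nhds hlt)]
      with z hz hz₀
    exact iff_of_true hz.le hz₀.le
  · filter_upwards [(hF y hy).eventually (lt_mem_nhds hgt), hF₀.eventually (lt_mem_nhds hgt)]
      with z hz hz₀
    exact iff_of_false hz.not_ge hz₀.not_ge

theorem setIntegral_eq_setIntegral_sdiff_biUnion_add_sum {α ι G : Type*} [MeasurableSpace α]
    [NormedAddCommGroup G] [NormedSpace ℝ G] {μ : Measure α} {f : α → G} {A : Set α}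
    (s : Finset ι) {T : ι → Set α} (hT : ∀ i ∈ s, MeasurableSet (T i))
    (hdisj : (s : Set ι).Pairwise (Disjoint on T)) (hf : IntegrableOn f A μ) :
    ∫ x in A, f x ∂μ = ∫ x in A \ ⋃ i ∈ s, T i, f x ∂μ + ∑ i ∈ s, ∫ x in A ∩ T i, f x ∂μ := by
  have hU : MeasurableSet (⋃ i ∈ s, T i) := Finset.measurableSet_biUnion s hT
  rw [← integral_inter_add_sdiff hU hf, add_comm, inter_comm, ← Measure.restrict_restrict hU,
    integral_biUnion_finset s hT hdisj fun i _ => Integrable.restrict hf]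
  refine congrArg _ (Finset.sum_congr rfl fun i hi => ?_)
  rw [Measure.restrict_restrict (hT i hi), inter_comm]

theorem Set.Finite.eventually_pairwise_disjoint_ball {X : Type*} [MetricSpace X] {s : Set X}
    (hs : s.Finite) : ∀ᶠ δ in 𝓝 (0 : ℝ), s.Pairwise (Disjoint on fun x => ball x δ) := by
  refine (eventually_all_finite hs).2 fun x _ => (eventually_all_finite hs).2 fun y _ => ?_
  by_cases hxy : x = y
  · exact Eventually.of_forall fun _ h => absurd hxy h
  · filter_upwards [eventually_lt_nhds (half_pos (dist_pos.2 hxy))] with δ hδ _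
    exact ball_disjoint_ball (by linarith)

theorem eventuallyEq_setIntegral_sublevel_Icc {X : Type*} [TopologicalSpace X]
    {F : X × ℝ → ℝ} {x₀ : X} {a b t δ : ℝ} {p : ℝ → ℝ} (R : Finset ℝ)
    (hF : ∀ w ∈ Icc a b, ContinuousAt F (x₀, w)) (hR : ∀ w ∈ Icc a b, F (x₀, w) = t → w ∈ R)
    (hδ : 0 < δ) (hRab : ∀ r ∈ R, ball r δ ⊆ Icc a b)
    (hdisj : (R : Set ℝ).Pairwise (Disjoint on fun r => ball r δ)) (hp : IntegrableOn p (Icc a b)) :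
    (fun x => ∫ w in {w | w ∈ Icc a b ∧ F (x, w) ≤ t}, p w) =ᶠ[𝓝 x₀]
      fun x => (∫ w in {w | w ∈ Icc a b ∧ F (x₀, w) ≤ t} \ ⋃ r ∈ R, ball r δ, p w) +
        ∑ r ∈ R, ∫ w in {w | F (x, w) ≤ t} ∩ ball r δ, p w := by
  set U := ⋃ r ∈ R, ball r δ
  have hstable : ∀ᶠ x in 𝓝 x₀, ∀ w ∈ Icc a b \ U, (F (x, w) ≤ t ↔ F (x₀, w) ≤ t) :=
    (isCompact_Icc.diff (isOpen_biUnion fun r _ => isOpen_ball)).eventually_forall_le_iff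
      (fun w hw => hF w hw.1)
      (fun w hw hFw => hw.2 (mem_biUnion (hR w hw.1 hFw) (mem_ball_self hδ)))
  filter_upwards [hstable] with x hx
  have hfar : {w | w ∈ Icc a b ∧ F (x, w) ≤ t} \ U = {w | w ∈ Icc a b ∧ F (x₀, w) ≤ t} \ U := by
    ext w
    exact and_congr_left fun hwU => and_congr_right fun hw => hx w ⟨hw, hwU⟩
  have hnear : ∀ r ∈ R,
      {w | w ∈ Icc a b ∧ F (x, w) ≤ t} ∩ ball r δ = {w | F (x, w) ≤ t} ∩ ball r δ := by
    intro r hr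
    ext w
    exact ⟨fun h => ⟨h.1.2, h.2⟩, fun h => ⟨⟨hRab r hr h.2, h.1⟩, h.2⟩⟩
  rw [setIntegral_eq_setIntegral_sdiff_biUnion_add_sum R (fun r _ => measurableSet_ball) hdisj
    (hp.mono_set fun w hw => hw.1), hfar, Finset.sum_congr rfl fun r hr => by rw [hnear r hr]]

variable {E : Type*} [NormedAddCommGroup E] [NormedSpace ℝ E]

theorem HasStrictFDerivAt.exists_hasFDerivAt_implicitFunction_real [CompleteSpace E]
    {F : E × ℝ → ℝ} {F' : E × ℝ →L[ℝ] ℝ} {x₀ : E} {r : ℝ}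
    (hF : HasStrictFDerivAt F F' (x₀, r)) (hc : F' (0, 1) ≠ 0) :
    ∃ ψ : E → ℝ, ψ x₀ = r ∧
      HasFDerivAt ψ (-(F' (0, 1))⁻¹ • F' ∘L .inl ℝ E ℝ) x₀ ∧
      ∀ᶠ x in 𝓝 x₀, F (x, ψ x) = F (x₀, r) := by
  have hF₂ : F' ∘L .inr ℝ E ℝ = ContinuousLinearEquiv.unitsEquivAut ℝ (.mk0 _ hc) := by
    ext; simp
  have hinv : (F' ∘L .inr ℝ E ℝ).IsInvertible := ⟨_, hF₂.symm⟩
  refine ⟨hF.implicitFunctionOfProdDomain hinv,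
    (hF.eventually_apply_eq_iff_implicitFunctionOfProdDomain hinv).self_of_nhds.1 rfl,
    (hF.hasStrictFDerivAt_implicitFunctionOfProdDomain hinv).hasFDerivAt.congr_fderiv ?_,
    hF.eventually_apply_implicitFunctionOfProdDomain hinv⟩
  rw [hF₂, ContinuousLinearMap.inverse_equiv]
  ext v
  simp [mul_comm]

theorem HasStrictFDerivAt.eventually_strictMonoOn_ball {F : E × ℝ → ℝ} {F' : E × ℝ →L[ℝ] ℝ}
    {x₀ : E} {r : ℝ} (hF : HasStrictFDerivAt F F' (x₀, r)) (hc : 0 < F' (0, 1)) :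
    ∀ᶠ δ in 𝓝 (0 : ℝ), ∀ᶠ x in 𝓝 x₀, StrictMonoOn (fun w => F (x, w)) (ball r δ) := by
  obtain ⟨s, hs, hlin⟩ := hF.approximates_deriv_on_nhds (c := (F' (0, 1) / 2).toNNReal)
    (Or.inr (by simpa using hc))
  rw [nhds_prod_eq] at hs
  obtain ⟨u, hu, v, hv, huv⟩ := mem_prod_iff.1 hs
  filter_upwards [eventually_ball_subset hv] with δ hδ
  filter_upwards [hu] with x hx w hw w' hw' hww'
  -- the error `F' (0, 1) / 2 * (w' - w)` is dominated by the increment `(w' - w) * F' (0, 1)`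
  have happrox := hlin (x, w') (huv ⟨hx, hδ hw'⟩) (x, w) (huv ⟨hx, hδ hw⟩)
  have hlinear : F' ((x, w') - (x, w)) = (w' - w) * F' (0, 1) := by
    rw [Prod.mk_sub_mk, sub_self, ← smul_eq_mul, ← map_smul, Prod.smul_mk, smul_zero,
      smul_eq_mul, mul_one]
  have hnorm : ‖(x, w') - (x, w)‖ = w' - w := by
    simp [hww'.le]
  rw [hlinear, hnorm, Real.norm_eq_abs, Real.coe_toNNReal _ (by positivity)] at happrox
  nlinarith [(abs_le.1 happrox).1]

theorem HasStrictFDerivAt.eventually_hasFDerivAt_setIntegral_sublevel_inter_ball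
    [CompleteSpace E] {F : E × ℝ → ℝ} {F' : E × ℝ →L[ℝ] ℝ} {x₀ : E} {r t : ℝ}
    (hF : HasStrictFDerivAt F F' (x₀, r)) (hFt : F (x₀, r) = t) (hc : F' (0, 1) ≠ 0)
    {p : ℝ → ℝ} (hp : Continuous p) :
    ∀ᶠ δ in 𝓝[>] (0 : ℝ), HasFDerivAt (fun x => ∫ w in {w | F (x, w) ≤ t} ∩ ball r δ, p w)
      (-(p r / |F' (0, 1)|) • F' ∘L .inl ℝ E ℝ) x₀ := by
  obtain ⟨ψ, hψr, hψ, hFψ⟩ := hF.exists_hasFDerivAt_implicitFunction_real hc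
  subst hFt
  have hψ_mem : ∀ δ > 0, ∀ᶠ x in 𝓝 x₀, ψ x ∈ Ioo (r - δ) (r + δ) := fun δ hδ =>
    hψ.continuousAt.eventually_mem (hψr ▸ Ioo_mem_nhds (by linarith) (by linarith))
  rcases hc.lt_or_gt with hneg | hpos
  · have hanti : ∀ᶠ δ in 𝓝 0, ∀ᶠ x in 𝓝 x₀, StrictAntiOn (fun w => F (x, w)) (ball r δ) := by
      filter_upwards [hF.neg.eventually_strictMonoOn_ball (by simpa using hneg)] with δ hδ
      filter_upwards [hδ] with x hx using by simpa using hx.neg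
    filter_upwards [nhdsWithin_le_nhds hanti, self_mem_nhdsWithin] with δ hδ (hδpos : 0 < δ)
    have hsublevel : (fun x => ∫ w in {w | F (x, w) ≤ F (x₀, r)} ∩ ball r δ, p w)
        =ᶠ[𝓝 x₀] fun x => ∫ w in ψ x..r + δ, p w := by
      filter_upwards [hδ, hψ_mem δ hδpos, hFψ] with x hx hxψ hxF
      rw [Real.ball_eq_Ioo] at hx ⊢
      rw [← hxF, hx.setOf_le_inter_Ioo hxψ, integral_Ico_eq_integral_Ioo,
        ← integral_Ioc_eq_integral_Ioo, intervalIntegral.integral_of_le hxψ.2.le]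
    have hderiv := (intervalIntegral.integral_hasStrictDerivAt_left
      (hp.intervalIntegrable _ (r + δ)) (hp.stronglyMeasurableAtFilter _ _)
      hp.continuousAt).hasDerivAt.comp_hasFDerivAt x₀ hψ
    refine (hderiv.congr_of_eventuallyEq hsublevel).congr_fderiv ?_
    rw [hψr, _root_.abs_of_neg hneg, smul_smul]
    congr 1
    field_simp
  · filter_upwards [nhdsWithin_le_nhds (hF.eventually_strictMonoOn_ball hpos),
      self_mem_nhdsWithin] with δ hδ (hδpos : 0 < δ)
    have hsublevel : (fun x => ∫ w in {w | F (x, w) ≤ F (x₀, r)} ∩ ball r δ, p w)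
        =ᶠ[𝓝 x₀] fun x => ∫ w in r - δ..ψ x, p w := by
      filter_upwards [hδ, hψ_mem δ hδpos, hFψ] with x hx hxψ hxF
      rw [Real.ball_eq_Ioo] at hx ⊢
      rw [← hxF, hx.setOf_le_inter_Ioo hxψ, intervalIntegral.integral_of_le hxψ.1.le]
    have hderiv := (hp.integral_hasStrictDerivAt (r - δ) _).hasDerivAt.comp_hasFDerivAt x₀ hψ
    refine (hderiv.congr_of_eventuallyEq hsublevel).congr_fderiv ?_
    rw [hψr, _root_.abs_of_pos hpos, smul_smul]
    congr 1
    field_simp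

theorem ContDiffAt.eventually_hasFDerivAt_setIntegral_sublevel_inter_ball [CompleteSpace E]
    {F : E × ℝ → ℝ} {x₀ : E} {r t : ℝ} (hF : ContDiffAt ℝ 1 F (x₀, r)) (hFt : F (x₀, r) = t)
    (hc : deriv (fun w => F (x₀, w)) r ≠ 0) {p : ℝ → ℝ} (hp : Continuous p) :
    ∀ᶠ δ in 𝓝[>] (0 : ℝ), HasFDerivAt (fun x => ∫ w in {w | F (x, w) ≤ t} ∩ ball r δ, p w)
      (-(p r / |deriv (fun w => F (x₀, w)) r|) • fderiv ℝ (fun x => F (x, r)) x₀) x₀ := by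
  have hF' := hF.hasStrictFDerivAt one_ne_zero
  have h₂ : deriv (fun w => F (x₀, w)) r = fderiv ℝ F (x₀, r) (0, 1) :=
    (hF'.hasFDerivAt.comp_hasDerivAt r (hasFDerivAt_prodMk_right x₀ r).hasDerivAt).deriv
  have h₁ : fderiv ℝ (fun x => F (x, r)) x₀ = fderiv ℝ F (x₀, r) ∘L .inl ℝ E ℝ :=
    (hF'.hasFDerivAt.comp x₀ (hasFDerivAt_prodMk_left x₀ r)).fderiv
  rw [h₂] at hc
  rw [h₁, h₂]
  exact hF'.eventually_hasFDerivAt_setIntegral_sublevel_inter_ball hFt hc hp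

theorem sublevel_integral_hasFDerivAt_x_general
    {d : ℕ} (a b : ℝ)
    (F : EuclideanSpace ℝ (Fin d) × ℝ → ℝ) (x0 : EuclideanSpace ℝ (Fin d))
    (V : Set (EuclideanSpace ℝ (Fin d) × ℝ)) (hV : IsOpen V)
    (hsub : ({x0} : Set (EuclideanSpace ℝ (Fin d))) ×ˢ Icc a b ⊆ V)
    (hF : ContDiffOn ℝ 1 F V)
    (p : ℝ → ℝ) (hp : Continuous p) (t : ℝ)
    (hfa : F (x0, a) ≠ t) (hfb : F (x0, b) ≠ t)
    (hRfin : {w ∈ Icc a b | F (x0, w) = t}.Finite)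
    (hreg : ∀ w ∈ {w ∈ Icc a b | F (x0, w) = t}, deriv (fun w' => F (x0, w')) w ≠ 0) :
    HasFDerivAt (fun x : EuclideanSpace ℝ (Fin d) =>
        ∫ w in {w | w ∈ Icc a b ∧ F (x, w) ≤ t}, p w)
      (-∑ w ∈ hRfin.toFinset,
          (p w / |deriv (fun w' => F (x0, w')) w|) •
            fderiv ℝ (fun x : EuclideanSpace ℝ (Fin d) => F (x, w)) x0) x0 := by
  set R := hRfin.toFinset
  have hFC : ∀ w ∈ Icc a b, ContDiffAt ℝ 1 F (x0, w) := fun w hw =>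
    hF.contDiffAt (hV.mem_nhds (hsub ⟨rfl, hw⟩))
  have hR : ∀ r ∈ R, r ∈ Ioo a b := fun r hr => by
    obtain ⟨⟨har, hrb⟩, hFr⟩ := hRfin.mem_toFinset.1 hr
    exact ⟨har.lt_of_ne (by rintro rfl; exact hfa hFr), hrb.lt_of_ne (by rintro rfl; exact hfb hFr)⟩
  have hinside : ∀ᶠ δ in 𝓝 (0 : ℝ), ∀ r ∈ R, ball r δ ⊆ Icc a b :=
    (eventually_all_finset R).2 fun r hr =>
      eventually_ball_subset (Icc_mem_nhds (hR r hr).1 (hR r hr).2)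
  obtain ⟨δ, hδ, hδpos, hδab, hδdisj⟩ := (((eventually_all_finset R).2 fun r hr =>
    (hFC r (Ioo_subset_Icc_self (hR r hr))).eventually_hasFDerivAt_setIntegral_sublevel_inter_ball
      (hRfin.mem_toFinset.1 hr).2 (hreg r (hRfin.mem_toFinset.1 hr)) hp).and
    (eventually_mem_nhdsWithin.and <| Eventually.filter_mono nhdsWithin_le_nhds <|
      hinside.and R.finite_toSet.eventually_pairwise_disjoint_ball)).exists
  have hsplit := eventuallyEq_setIntegral_sublevel_Icc R (fun w hw => (hFC w hw).continuousAt)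
    (fun w hw hFw => hRfin.mem_toFinset.2 ⟨hw, hFw⟩) hδpos hδab hδdisj hp.integrableOn_Icc
  refine (((HasFDerivAt.fun_sum hδ).const_add _).congr_of_eventuallyEq hsplit).congr_fderiv ?_
  simp [Finset.sum_neg_distrib]

/-- The x-gradient formula from the proof of the paper's Lemma 1 specialized to a finite
regular level set: `x ↦ ∫_{ {w ∈ [a,b] : F(x,w) ≤ t} } p(w) dw` is differentiable at `x0`
with differential `−Σ_{w ∈ R} (p(w)/|∂F/∂w(x0,w)|) • D_x F(x0,w)`, where
`R = {w ∈ [a,b] : F(x0,w) = t}`. -/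
theorem sublevel_integral_hasFDerivAt_x
    {d : ℕ} (a b : ℝ) (hab : a < b)
    (F : EuclideanSpace ℝ (Fin d) × ℝ → ℝ) (x0 : EuclideanSpace ℝ (Fin d))
    (V : Set (EuclideanSpace ℝ (Fin d) × ℝ)) (hV : IsOpen V)
    (hsub : ({x0} : Set (EuclideanSpace ℝ (Fin d))) ×ˢ Icc a b ⊆ V)
    (hF : ContDiffOn ℝ 1 F V)
    (p : ℝ → ℝ) (hp : Continuous p) (t : ℝ)
    (hfa : F (x0, a) ≠ t) (hfb : F (x0, b) ≠ t)
    (hRfin : {w ∈ Icc a b | F (x0, w) = t}.Finite)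
    (hreg : ∀ w ∈ {w ∈ Icc a b | F (x0, w) = t}, deriv (fun w' => F (x0, w')) w ≠ 0) :
    HasFDerivAt (fun x : EuclideanSpace ℝ (Fin d) =>
        ∫ w in {w | w ∈ Icc a b ∧ F (x, w) ≤ t}, p w)
      (-∑ w ∈ hRfin.toFinset,
          (p w / |deriv (fun w' => F (x0, w')) w|) •
            fderiv ℝ (fun x : EuclideanSpace ℝ (Fin d) => F (x, w)) x0) x0 :=
  sublevel_integral_hasFDerivAt_x_general a b F x0 V hV hsub hF p hp t hfa hfb hRfin hreg
end

section
/- Let E be a finite-dimensional real normed vector space, let L ≥ 1, and let f_1, …, f_L : E → ℝ each be differentiable at x0 ∈ E with the values f_1(x0), …, f_L(x0) pairwise distinct. Fix 1 ≤ m ≤ L and let T ⊆ {1,…,L} be the set of m indices i for which f_i(x0) is among the m largest of the values f_1(x0), …, f_L(x0). Then the function S_m(x) := (1/m) · (sum of the m largest values among f_1(x), …, f_L(x)) is differentiable at x0, with differential (1/m) Σ_{i ∈ T} Df_i(x0). -/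
/-!
Near `x₀` the strict order of the values `f i x` is that of the `f i x₀`, since finitely many
strict inequalities between continuous functions persist on a neighbourhood. Hence the indices
of the `m` largest values stay the same set `T`, and there `S_m` coincides with the smooth function
`x ↦ (1/m) ∑_{i ∈ T} f i x`, whose derivative is the claimed one.
-/

/-- The average of the `m` largest values of a finite list of reals: the sum of the top `m`
entries of the list sorted in increasing order (i.e. with the `L - m` smallest dropped),
divided by `m`. Used as the Monte Carlo CVaR estimator. -/
noncomputable def avgTopM (L m : ℕ) (g : Fin L → ℝ) : ℝ :=
  (1 / (m : ℝ)) * (((Finset.univ.val.map g).sort (· ≤ ·)).drop (L - m)).sum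

open Finset Topology Filter

theorem List.Pairwise.filter_rank_lt_eq_drop {α : Type*} [LinearOrder α] {s : List α}
    (hs : s.Pairwise (· < ·)) (m : ℕ) :
    s.filter (fun y => (s.filter (y < ·)).length < m) = s.drop (s.length - m) := by
  induction s with
  | nil => simp
  | cons a t ih =>
    obtain ⟨ha, ht⟩ := List.pairwise_cons.1 hs
    have rank_head : (a :: t).filter (a < ·) = t := by
      simpa using List.filter_eq_self.2 fun y hy => decide_eq_true (ha y hy)
    have rank_tail : ∀ y ∈ t, (a :: t).filter (y < ·) = t.filter (y < ·) := fun y hy => by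
      simp [(ha y hy).not_gt]
    have tail_eq : t.filter (fun y => ((a :: t).filter (y < ·)).length < m) =
        t.drop (t.length - m) := by
      rw [← ih ht]
      exact List.filter_congr fun y hy => by rw [rank_tail y hy]
    rw [List.filter_cons, tail_eq, rank_head, List.length_cons]
    by_cases htm : t.length < m
    · simp [htm, Nat.sub_eq_zero_of_le htm.le, Nat.sub_eq_zero_of_le htm]
    · simp [htm, Nat.succ_sub (not_lt.1 htm)]

section TopIndices

variable {ι α : Type*} [Fintype ι] [LinearOrder α]

/-- For injective `g`, the indices of the `m` largest values of `g`. -/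
def topIndices (g : ι → α) (m : ℕ) : Finset ι := {i | #{j | g i < g j} < m}

theorem topIndices_congr {g g' : ι → α} (h : ∀ i j, g i < g j ↔ g' i < g' j) (m : ℕ) :
    topIndices g m = topIndices g' m := by
  simp only [topIndices, h]

theorem coe_drop_sort_eq_map_topIndices {g : ι → α} (hg : Function.Injective g) (m : ℕ) :
    (((univ.val.map g).sort (· ≤ ·)).drop (Fintype.card ι - m) : Multiset α) =
      (topIndices g m).val.map g := by
  set s := (univ.val.map g).sort (· ≤ ·)
  have hs : (s : Multiset α) = univ.val.map g := Multiset.sort_eq _ _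
  have hs_lt : s.Pairwise (· < ·) := by
    refine List.sortedLT_iff_pairwise.1 ((List.sortedLE_iff_pairwise.2
      (Multiset.pairwise_sort _ _)).sortedLT_of_nodup ?_)
    rw [← Multiset.coe_nodup, hs]
    exact univ.nodup.map hg
  have hlen : s.length = Fintype.card ι := by
    rw [← Multiset.coe_card, hs, Multiset.card_map, card_val, card_univ]
  have rank_eq : ∀ y, (s.filter (y < ·)).length = #{j | y < g j} := fun y => by
    rw [← Multiset.coe_card, ← Multiset.filter_coe, hs, Multiset.filter_map]
    simp [Finset.card, Finset.filter_val]
  rw [← hlen, ← hs_lt.filter_rank_lt_eq_drop, ← Multiset.filter_coe, hs, Multiset.filter_map]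
  simp only [rank_eq]
  rfl

theorem card_topIndices {g : ι → α} (hg : Function.Injective g) {m : ℕ}
    (hm : m ≤ Fintype.card ι) : #(topIndices g m) = m := by
  have := congrArg Multiset.card (coe_drop_sort_eq_map_topIndices hg m)
  rw [Multiset.coe_card, List.length_drop, Multiset.card_map, card_val, Multiset.length_sort,
    Multiset.card_map, card_val, card_univ] at this
  omega

theorem sum_drop_sort_eq_sum_topIndices [AddCommMonoid α] {g : ι → α}
    (hg : Function.Injective g) (m : ℕ) :
    (((univ.val.map g).sort (· ≤ ·)).drop (Fintype.card ι - m)).sum =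
      ∑ i ∈ topIndices g m, g i := by
  rw [← Multiset.sum_coe, coe_drop_sort_eq_map_topIndices hg]
  rfl

end TopIndices

theorem Function.Injective.of_lt_iff_lt {ι α : Type*} [LinearOrder α] {g g' : ι → α}
    (hg' : Function.Injective g') (h : ∀ i j, g i < g j ↔ g' i < g' j) :
    Function.Injective g := fun i j hij =>
  hg' <| le_antisymm (not_lt.1 fun hji => ((h j i).2 hji).ne' hij)
    (not_lt.1 fun hij' => ((h i j).2 hij').ne hij)

theorem eventually_lt_iff_lt_of_injective {ι X α : Type*} [Finite ι] [TopologicalSpace X]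
    [TopologicalSpace α] [LinearOrder α] [OrderClosedTopology α] {f : ι → X → α} {x₀ : X}
    (hf : ∀ i, ContinuousAt (f i) x₀) (hinj : Function.Injective (f · x₀)) :
    ∀ᶠ x in 𝓝 x₀, ∀ i j, f i x < f j x ↔ f i x₀ < f j x₀ := by
  have keep_lt : ∀ i j, f i x₀ < f j x₀ → ∀ᶠ x in 𝓝 x₀, f i x < f j x := fun i j h =>
    (hf i).eventually_lt (hf j) h
  simp only [eventually_all]
  intro i j
  rcases lt_trichotomy (f i x₀) (f j x₀) with h | h | h
  · exact (keep_lt i j h).mono fun x hx => iff_of_true hx h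
  · obtain rfl := hinj h
    simp
  · exact (keep_lt j i h).mono fun x hx => iff_of_false hx.not_gt h.not_gt

theorem avgTopM_eventuallyEq {X : Type*} [TopologicalSpace X] {L : ℕ} {f : Fin L → X → ℝ}
    {x₀ : X} (hf : ∀ i, ContinuousAt (f i) x₀) (hinj : Function.Injective (f · x₀)) (m : ℕ) :
    (fun x => avgTopM L m (f · x)) =ᶠ[𝓝 x₀]
      fun x => 1 / (m : ℝ) * ∑ i ∈ topIndices (f · x₀) m, f i x := by
  filter_upwards [eventually_lt_iff_lt_of_injective hf hinj] with x hx
  have hsum := sum_drop_sort_eq_sum_topIndices (hinj.of_lt_iff_lt hx) m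
  rw [Fintype.card_fin] at hsum
  rw [avgTopM, hsum, topIndices_congr hx]

theorem avgTopM_hasFDerivAt_general
    {E : Type*} [NormedAddCommGroup E] [NormedSpace ℝ E]
    (L : ℕ) (f : Fin L → E → ℝ) (x0 : E)
    (hdiff : ∀ i, DifferentiableAt ℝ (f i) x0)
    (hdistinct : Function.Injective (fun i => f i x0))
    (m : ℕ) (hmL : m ≤ L) :
    (Finset.univ.filter fun i : Fin L =>
        (Finset.univ.filter fun j : Fin L => f i x0 < f j x0).card < m).card = m ∧
    HasFDerivAt (fun x : E => avgTopM L m fun i => f i x)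
      ((1 / (m : ℝ)) •
        ∑ i ∈ Finset.univ.filter fun i : Fin L =>
            (Finset.univ.filter fun j : Fin L => f i x0 < f j x0).card < m,
          fderiv ℝ (f i) x0) x0 := by
  refine ⟨card_topIndices hdistinct (by rwa [Fintype.card_fin]), ?_⟩
  have hsum : HasFDerivAt (fun x => 1 / (m : ℝ) * ∑ i ∈ topIndices (f · x0) m, f i x)
      ((1 / (m : ℝ)) • ∑ i ∈ topIndices (f · x0) m, fderiv ℝ (f i) x0) x0 :=
    (HasFDerivAt.fun_sum fun i _ => (hdiff i).hasFDerivAt).const_mul _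
  exact hsum.congr_of_eventuallyEq
    (avgTopM_eventuallyEq (fun i => (hdiff i).continuousAt) hdistinct m)

/-- Differentiability of the Monte Carlo CVaR estimator: if `f_1(x0), …, f_L(x0)` are
pairwise distinct and each `f_i` is differentiable at `x0`, then the average `S_m` of the
`m` largest of the values `f_1(x), …, f_L(x)` is differentiable at `x0`, with differential
`(1/m) Σ_{i ∈ T} Df_i(x0)` where `T` is the set of the `m` indices whose values at `x0`
are among the `m` largest. -/
theorem avgTopM_hasFDerivAt
    {E : Type*} [NormedAddCommGroup E] [NormedSpace ℝ E] [FiniteDimensional ℝ E]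
    (L : ℕ) (hL : 1 ≤ L) (f : Fin L → E → ℝ) (x0 : E)
    (hdiff : ∀ i, DifferentiableAt ℝ (f i) x0)
    (hdistinct : Function.Injective (fun i => f i x0))
    (m : ℕ) (hm1 : 1 ≤ m) (hmL : m ≤ L) :
    (Finset.univ.filter fun i : Fin L =>
        (Finset.univ.filter fun j : Fin L => f i x0 < f j x0).card < m).card = m ∧
    HasFDerivAt (fun x : E => avgTopM L m fun i => f i x)
      ((1 / (m : ℝ)) •
        ∑ i ∈ Finset.univ.filter fun i : Fin L =>
            (Finset.univ.filter fun j : Fin L => f i x0 < f j x0).card < m,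
          fderiv ℝ (f i) x0) x0 :=
  avgTopM_hasFDerivAt_general L f x0 hdiff hdistinct m hmL
end

section
/- Let E be a finite-dimensional real normed vector space, let L ≥ 1, and let f_1, …, f_L : E → ℝ each be differentiable at x0 ∈ E with the values f_1(x0), …, f_L(x0) pairwise distinct. Fix 1 ≤ k ≤ L and let i* be the unique index such that f_{i*}(x0) is the k-th largest of the values f_1(x0), …, f_L(x0). Then the function V_k(x) := (k-th largest value among f_1(x), …, f_L(x)) is differentiable at x0, with differential Df_{i*}(x0). -/
/-! The values `f i x0` are distinct, so the strict order in which a permutation `σ` sorts them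
is an open condition: near `x0` the same `σ` still sorts the values `f i x`, hence the `k`-th
largest value coincides with `f istar` on a neighbourhood of `x0` and inherits its derivative. -/

/-- The `k`-th largest value (1-indexed) of a finite list of reals: the entry at position
`L - k` (0-indexed) of the list sorted in increasing order. Used as the Monte Carlo VaR
estimator. -/
noncomputable def kthLargest (L k : ℕ) (g : Fin L → ℝ) : ℝ :=
  (((Finset.univ.val.map g).sort (· ≤ ·)).getD (L - k) 0)

open Filter Topology

theorem Multiset.sort_map_univ_eq_ofFn_comp {α : Type*} [LinearOrder α] {n : ℕ}
    (g : Fin n → α) (σ : Equiv.Perm (Fin n)) (hσ : Monotone (g ∘ σ)) :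
    (Finset.univ.val.map g).sort (· ≤ ·) = List.ofFn (g ∘ σ) := by
  rw [Fin.univ_val_map, ← Multiset.coe_eq_coe.mpr (σ.ofFn_comp_perm g), Multiset.coe_sort]
  refine List.mergeSort_of_pairwise ?_
  simpa only [decide_eq_true_eq, ← List.sortedLE_iff_pairwise] using hσ.sortedLE_ofFn

theorem kthLargest_eq_apply_of_monotone {L k : ℕ} (g : Fin L → ℝ) (σ : Equiv.Perm (Fin L))
    (hσ : Monotone (g ∘ σ)) (i : Fin L) (hi : (i : ℕ) = L - k) :
    kthLargest L k g = g (σ i) := by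
  rw [kthLargest, Multiset.sort_map_univ_eq_ofFn_comp g σ hσ, ← hi,
    List.getD_eq_getElem _ _ (by simp), List.getElem_ofFn, Function.comp_apply]

theorem eventually_strictMono_of_continuousAt {X ι α : Type*} [TopologicalSpace X]
    [Preorder ι] [Finite ι] [LinearOrder α] [TopologicalSpace α] [OrderClosedTopology α]
    {f : ι → X → α} {x0 : X} (hf : ∀ i, ContinuousAt (f i) x0)
    (hmono : StrictMono fun i => f i x0) :
    ∀ᶠ x in 𝓝 x0, StrictMono fun i => f i x := by
  have hpair : ∀ i j, ∀ᶠ x in 𝓝 x0, i < j → f i x < f j x := fun i j => by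
    by_cases hij : i < j
    · filter_upwards [(hf i).eventually_lt (hf j) (hmono hij)] with x hx _ using hx
    · exact Eventually.of_forall fun _ h => absurd h hij
  simpa only [StrictMono, eventually_all] using hpair

theorem kthLargest_eventuallyEq {X : Type*} [TopologicalSpace X] {L k : ℕ}
    {f : Fin L → X → ℝ} {x0 : X} (hf : ∀ i, ContinuousAt (f i) x0)
    (hinj : Function.Injective fun i => f i x0) (hk : 1 ≤ k) {istar : Fin L}
    (histar : f istar x0 = kthLargest L k fun i => f i x0) :
    (fun x => kthLargest L k fun i => f i x) =ᶠ[𝓝 x0] f istar := by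
  set σ := Tuple.sort fun i => f i x0
  have hsorted : StrictMono fun i => f (σ i) x0 :=
    (Tuple.monotone_sort _).strictMono_of_injective (hinj.comp σ.injective)
  let m : Fin L := ⟨L - k, by have := istar.pos; omega⟩
  have hσm : σ m = istar := hinj <| Eq.symm <|
    histar.trans (kthLargest_eq_apply_of_monotone (fun i => f i x0) σ hsorted.monotone m rfl)
  filter_upwards [eventually_strictMono_of_continuousAt (fun i => hf (σ i)) hsorted]
    with x hx
  rw [kthLargest_eq_apply_of_monotone (fun i => f i x) σ hx.monotone m rfl, hσm]

theorem kthLargest_hasFDerivAt_general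
    {E : Type*} [NormedAddCommGroup E] [NormedSpace ℝ E]
    (L : ℕ) (f : Fin L → E → ℝ) (x0 : E)
    (hdiff : ∀ i, DifferentiableAt ℝ (f i) x0)
    (hdistinct : Function.Injective (fun i => f i x0))
    (k : ℕ) (hk1 : 1 ≤ k)
    (istar : Fin L) (histar : f istar x0 = kthLargest L k fun i => f i x0) :
    HasFDerivAt (fun x : E => kthLargest L k fun i => f i x)
      (fderiv ℝ (f istar) x0) x0 :=
  (hdiff istar).hasFDerivAt.congr_of_eventuallyEq
    (kthLargest_eventuallyEq (fun i => (hdiff i).continuousAt) hdistinct hk1 histar)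

/-- Differentiability of the Monte Carlo VaR estimator: if `f_1(x0), …, f_L(x0)` are
pairwise distinct and each `f_i` is differentiable at `x0`, and `i*` is the (unique) index
with `f_{i*}(x0)` the `k`-th largest of the values at `x0`, then the order statistic
`V_k(x) = (k`-th largest of `f_1(x), …, f_L(x))` is differentiable at `x0` with
differential `Df_{i*}(x0)`. -/
theorem kthLargest_hasFDerivAt
    {E : Type*} [NormedAddCommGroup E] [NormedSpace ℝ E] [FiniteDimensional ℝ E]
    (L : ℕ) (hL : 1 ≤ L) (f : Fin L → E → ℝ) (x0 : E)
    (hdiff : ∀ i, DifferentiableAt ℝ (f i) x0)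
    (hdistinct : Function.Injective (fun i => f i x0))
    (k : ℕ) (hk1 : 1 ≤ k) (hkL : k ≤ L)
    (istar : Fin L) (histar : f istar x0 = kthLargest L k fun i => f i x0) :
    HasFDerivAt (fun x : E => kthLargest L k fun i => f i x)
      (fderiv ℝ (f istar) x0) x0 :=
  kthLargest_hasFDerivAt_general L f x0 hdiff hdistinct k hk1 istar histar
end
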